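/- Finsler descent identity: Let x be a feasible curve with velocities u_t := x_{t+1} − x_t, and let (ũ, μ) be the unique solution of the Finsler GEORCE system with G_t := G(x_t, u_t), ν_t := ∇_y[u_tᵀ G(y, u_t) u_t]|_{y = x_t}, and ζ_t := ∇_y[u_tᵀ G(x_t, y) u_t]|_{y = u_t}. Set Δu_t := ũ_t − u_t and Δx_t := Σ_{j=0}^{t−1} Δu_j (so Δx_0 = Δx_T = 0). Then the derivative at α = 0 of the function α ↦ E_F(x + α Δx) equals −2 Σ_{t=0}^{T−1} Δu_tᵀ G(x_t, u_t) Δu_t; in particular it is ≤ 0, with equality if and only if ũ = u. -/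

import Mathlib

open Matrix
open scoped RealInnerProductSpace

/-- Reinterpret a vector in `Fin d → ℝ` as a point of `EuclideanSpace ℝ (Fin d)`
(the two types are definitionally equal). -/
def toE (d : ℕ) (v : Fin d → ℝ) : EuclideanSpace ℝ (Fin d) := WithLp.toLp 2 v

/-- The discretized Finsler energy functional
`E_F(x) = ∑_{t=0}^{T-1} u_tᵀ G(x_t, u_t) u_t` with `u_t = x_{t+1} - x_t`. -/
noncomputable def energyF (d T : ℕ)
    (G : EuclideanSpace ℝ (Fin d) → EuclideanSpace ℝ (Fin d) →
      Matrix (Fin d) (Fin d) ℝ)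
    (x : ℕ → EuclideanSpace ℝ (Fin d)) : ℝ :=
  ∑ t ∈ Finset.range T,
    (x (t + 1) - x t) ⬝ᵥ (G (x t) (x (t + 1) - x t)).mulVec (x (t + 1) - x t)

variable {d : ℕ}
local notation "E" => EuclideanSpace ℝ (Fin d)

lemma dot_eq_inner (a b : E) : a ⬝ᵥ b = ⟪a, b⟫ := by
  simp [dotProduct, PiLp.inner_apply, RCLike.inner_apply, mul_comm]

lemma grad_pair (f : E → ℝ) (x v : E) : ⟪gradient f x, v⟫ = fderiv ℝ f x v := by
  rw [gradient, ← InnerProductSpace.toDual_apply_apply,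
    (InnerProductSpace.toDual ℝ _).apply_symm_apply]

lemma dot_mulVec_eq_sum (v w : Fin d → ℝ) (M : Matrix (Fin d) (Fin d) ℝ) :
    v ⬝ᵥ M.mulVec w = ∑ i, ∑ j, (v i * w j) * M i j := by
  simp only [dotProduct, Matrix.mulVec, Finset.mul_sum]
  exact Finset.sum_congr rfl fun i _ => Finset.sum_congr rfl fun j _ => by ring


lemma entry_fst {G : E → E → Matrix (Fin d) (Fin d) ℝ} (hG : ∀ i j, ContDiff ℝ (⊤ : ℕ∞) fun p : E × E => G p.1 p.2 i j) (P W : E) (i j : Fin d) :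
    HasFDerivAt (fun y : E => G y W i j)
      ((fderiv ℝ (fun p : E × E => G p.1 p.2 i j) (P, W)).comp
        ((ContinuousLinearMap.id ℝ E).prod 0)) P := by
  have h1 : HasFDerivAt (fun y : E => ((y, W) : E × E))
      ((ContinuousLinearMap.id ℝ E).prod 0) P :=
    (hasFDerivAt_id P).prodMk (hasFDerivAt_const W P)
  exact (((hG i j).differentiable (by simp) (P, W)).hasFDerivAt).comp P h1

lemma entry_snd {G : E → E → Matrix (Fin d) (Fin d) ℝ} (hG : ∀ i j, ContDiff ℝ (⊤ : ℕ∞) fun p : E × E => G p.1 p.2 i j) (P W : E) (i j : Fin d) :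
    HasFDerivAt (fun y : E => G P y i j)
      ((fderiv ℝ (fun p : E × E => G p.1 p.2 i j) (P, W)).comp
        ((0 : E →L[ℝ] E).prod (ContinuousLinearMap.id ℝ E))) W := by
  have h1 : HasFDerivAt (fun y : E => ((P, y) : E × E))
      ((0 : E →L[ℝ] E).prod (ContinuousLinearMap.id ℝ E)) W :=
    (hasFDerivAt_const P W).prodMk (hasFDerivAt_id W)
  exact (((hG i j).differentiable (by simp) (P, W)).hasFDerivAt).comp W h1

lemma quad_partial_fst {G : E → E → Matrix (Fin d) (Fin d) ℝ} (hG : ∀ i j, ContDiff ℝ (⊤ : ℕ∞) fun p : E × E => G p.1 p.2 i j) (P W V : E) :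
    fderiv ℝ (fun y => W ⬝ᵥ (G y W).mulVec W) P V
      = ∑ i, ∑ j, (W i * W j) * (fderiv ℝ (fun p : E × E => G p.1 p.2 i j) (P, W)) (V, 0) := by
  have hf : HasFDerivAt (fun y : E => W ⬝ᵥ (G y W).mulVec W)
      (∑ i, ∑ j, (W i * W j) • ((fderiv ℝ (fun p : E × E => G p.1 p.2 i j) (P, W)).comp
        ((ContinuousLinearMap.id ℝ E).prod 0))) P := by
    have : (fun y : E => W ⬝ᵥ (G y W).mulVec W)
        = fun y => ∑ i, ∑ j, (W i * W j) * G y W i j := by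
      funext y; exact dot_mulVec_eq_sum W W (G y W)
    rw [this]
    exact HasFDerivAt.fun_sum fun i _ => HasFDerivAt.fun_sum fun j _ =>
      (entry_fst hG P W i j).const_mul _
  rw [hf.fderiv]
  simp [ContinuousLinearMap.sum_apply]

lemma quad_partial_snd {G : E → E → Matrix (Fin d) (Fin d) ℝ} (hG : ∀ i j, ContDiff ℝ (⊤ : ℕ∞) fun p : E × E => G p.1 p.2 i j) (P W V : E) :
    fderiv ℝ (fun y => W ⬝ᵥ (G P y).mulVec W) W V
      = ∑ i, ∑ j, (W i * W j) * (fderiv ℝ (fun p : E × E => G p.1 p.2 i j) (P, W)) (0, V) := by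
  have hf : HasFDerivAt (fun y : E => W ⬝ᵥ (G P y).mulVec W)
      (∑ i, ∑ j, (W i * W j) • ((fderiv ℝ (fun p : E × E => G p.1 p.2 i j) (P, W)).comp
        ((0 : E →L[ℝ] E).prod (ContinuousLinearMap.id ℝ E)))) W := by
    have : (fun y : E => W ⬝ᵥ (G P y).mulVec W)
        = fun y => ∑ i, ∑ j, (W i * W j) * G P y i j := by
      funext y; exact dot_mulVec_eq_sum W W (G P y)
    rw [this]
    exact HasFDerivAt.fun_sum fun i _ => HasFDerivAt.fun_sum fun j _ =>
      (entry_snd hG P W i j).const_mul _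
  rw [hf.fderiv]
  simp [ContinuousLinearMap.sum_apply]


lemma keyDeriv {G : E → E → Matrix (Fin d) (Fin d) ℝ}
    (hG : ∀ i j, ContDiff ℝ (⊤ : ℕ∞) fun p : E × E => G p.1 p.2 i j) (P W DP DW : E) :
    HasDerivAt (fun α : ℝ =>
        (W + α • DW) ⬝ᵥ (G (P + α • DP) (W + α • DW)).mulVec (W + α • DW))
      ((gradient (fun y => W ⬝ᵥ (G y W).mulVec W) P : E) ⬝ᵥ DP
        + (gradient (fun y => W ⬝ᵥ (G P y).mulVec W) W : E) ⬝ᵥ DW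
        + (DW ⬝ᵥ (G P W).mulVec W + W ⬝ᵥ (G P W).mulVec DW)) 0 := by
  -- the moving point
  have hγ : HasDerivAt (fun α : ℝ => ((P + α • DP, W + α • DW) : E × E)) ((DP, DW) : E × E) 0 := by
    have h1 : HasDerivAt (fun α : ℝ => P + α • DP) DP 0 := by
      simpa using ((hasDerivAt_id (0 : ℝ)).smul_const DP).const_add P
    have h2 : HasDerivAt (fun α : ℝ => W + α • DW) DW 0 := by
      simpa using ((hasDerivAt_id (0 : ℝ)).smul_const DW).const_add W
    exact h1.prodMk h2
  have hpt : ((P + (0 : ℝ) • DP, W + (0 : ℝ) • DW) : E × E) = (P, W) := by simp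
  -- entrywise derivative along the curve
  have hg : ∀ i j, HasDerivAt (fun α : ℝ => G (P + α • DP) (W + α • DW) i j)
      ((fderiv ℝ (fun p : E × E => G p.1 p.2 i j) (P, W)) (DP, DW)) 0 := by
    intro i j
    have hd : HasFDerivAt (fun p : E × E => G p.1 p.2 i j)
        (fderiv ℝ (fun p : E × E => G p.1 p.2 i j) (P, W))
        ((P + (0 : ℝ) • DP, W + (0 : ℝ) • DW) : E × E) := by
      rw [hpt]
      exact (((hG i j).differentiable (by simp)) (P, W)).hasFDerivAt
    exact hd.comp_hasDerivAt 0 hγ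
  -- coordinate functions
  have ha : ∀ i : Fin d, HasDerivAt (fun α : ℝ => (W + α • DW) i) (DW i) 0 := by
    intro i
    have : HasDerivAt (fun α : ℝ => W i + α * DW i) (DW i) 0 := by
      simpa using ((hasDerivAt_id (0 : ℝ)).mul_const (DW i)).const_add (W i)
    exact this
  -- the scalar form of the summand
  have hfun : (fun α : ℝ =>
      (W + α • DW) ⬝ᵥ (G (P + α • DP) (W + α • DW)).mulVec (W + α • DW))
      = fun α : ℝ => ∑ i, ∑ j,
          ((W + α • DW) i * (W + α • DW) j) * G (P + α • DP) (W + α • DW) i j := by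
    funext α; exact dot_mulVec_eq_sum _ _ _
  rw [hfun]
  have hterm : ∀ i j, HasDerivAt (fun α : ℝ =>
      ((W + α • DW) i * (W + α • DW) j) * G (P + α • DP) (W + α • DW) i j)
      ((DW i * W j + W i * DW j) * G P W i j
        + (W i * W j) * (fderiv ℝ (fun p : E × E => G p.1 p.2 i j) (P, W)) (DP, DW)) 0 := by
    intro i j
    have := ((ha i).mul (ha j)).mul (hg i j)
    simp only [zero_smul, add_zero] at this
    exact this.congr_deriv (by simp)
  have hsum := HasDerivAt.fun_sum (fun i (_ : i ∈ Finset.univ) =>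
    HasDerivAt.fun_sum (fun j (_ : j ∈ Finset.univ) => hterm i j))
  refine hsum.congr_deriv ?_
  symm
  -- identify the derivative value
  have hsplit : ∀ i j, (fderiv ℝ (fun p : E × E => G p.1 p.2 i j) (P, W)) ((DP, DW) : E × E)
      = (fderiv ℝ (fun p : E × E => G p.1 p.2 i j) (P, W)) ((DP, 0) : E × E)
        + (fderiv ℝ (fun p : E × E => G p.1 p.2 i j) (P, W)) ((0, DW) : E × E) := by
    intro i j
    rw [← map_add]
    congr 1
    simp
  have e1 : (gradient (fun y => W ⬝ᵥ (G y W).mulVec W) P : E) ⬝ᵥ DP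
      = ∑ i, ∑ j, (W i * W j) * (fderiv ℝ (fun p : E × E => G p.1 p.2 i j) (P, W)) ((DP, 0) : E × E) := by
    rw [dot_eq_inner, grad_pair, quad_partial_fst hG]
  have e2 : (gradient (fun y => W ⬝ᵥ (G P y).mulVec W) W : E) ⬝ᵥ DW
      = ∑ i, ∑ j, (W i * W j) * (fderiv ℝ (fun p : E × E => G p.1 p.2 i j) (P, W)) ((0, DW) : E × E) := by
    rw [dot_eq_inner, grad_pair, quad_partial_snd hG]
  have e3 : DW ⬝ᵥ (G P W).mulVec W = ∑ i, ∑ j, (DW i * W j) * G P W i j :=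
    dot_mulVec_eq_sum _ _ _
  have e4 : W ⬝ᵥ (G P W).mulVec DW = ∑ i, ∑ j, (W i * DW j) * G P W i j :=
    dot_mulVec_eq_sum _ _ _
  rw [e1, e2, e3, e4]
  simp only [hsplit]
  simp only [← Finset.sum_add_distrib]
  exact Finset.sum_congr rfl fun i _ => Finset.sum_congr rfl fun j _ => by ring

lemma symm_dot {M : Matrix (Fin d) (Fin d) ℝ} (hM : M.IsSymm) (v w : Fin d → ℝ) :
    M.mulVec v ⬝ᵥ w = v ⬝ᵥ M.mulVec w := by
  rw [Matrix.dotProduct_mulVec, ← Matrix.mulVec_transpose, hM, dotProduct_comm]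


/-- Finsler descent identity: if `(ũ, μ)` solves the Finsler GEORCE system for the
feasible curve `x` with velocities `u_t = x_{t+1} - x_t`, and `Δu_t = ũ_t - u_t`,
`Δx_t = ∑_{j<t} Δu_j`, then the derivative at `α = 0` of `α ↦ E_F(x + α Δx)` equals
`-2 ∑_t Δu_tᵀ G(x_t, u_t) Δu_t`; in particular it is `≤ 0`, with equality iff
`ũ = u`. -/
theorem finsler_georce_descent_identity
    (d T : ℕ) (hd : 1 ≤ d) (hT : 2 ≤ T)
    (a b : EuclideanSpace ℝ (Fin d))
    (G : EuclideanSpace ℝ (Fin d) → EuclideanSpace ℝ (Fin d) →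
      Matrix (Fin d) (Fin d) ℝ)
    (hGsmooth : ∀ i j, ContDiff ℝ (⊤ : ℕ∞) fun p :
      EuclideanSpace ℝ (Fin d) × EuclideanSpace ℝ (Fin d) => G p.1 p.2 i j)
    (hGsym : ∀ y v, (G y v).IsSymm)
    (hGpos : ∀ y v, (G y v).PosDef)
    (x : ℕ → EuclideanSpace ℝ (Fin d))
    (hx0 : x 0 = a) (hxT : x T = b)
    (u : ℕ → EuclideanSpace ℝ (Fin d)) (hu : ∀ t, u t = x (t + 1) - x t)
    (utilde μ : ℕ → EuclideanSpace ℝ (Fin d))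
    -- `2 G_t ũ_t + ζ_t + μ_t = 0` where `ζ_t = ∇_y[u_tᵀ G(x_t, y) u_t]|_{y = u_t}`
    (hsys1 : ∀ t < T,
      (2 : ℝ) • toE d ((G (x t) (u t)).mulVec (utilde t)) +
        gradient (fun y => u t ⬝ᵥ (G (x t) y).mulVec (u t)) (u t) + μ t = 0)
    -- `ν_t + μ_t = μ_{t-1}` where `ν_t = ∇_y[u_tᵀ G(y, u_t) u_t]|_{y = x_t}`
    (hsys2 : ∀ t, 1 ≤ t → t ≤ T - 1 →
      gradient (fun y => u t ⬝ᵥ (G y (u t)).mulVec (u t)) (x t) + μ t = μ (t - 1))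
    (hsys3 : ∑ t ∈ Finset.range T, utilde t = b - a)
    (Δu : ℕ → EuclideanSpace ℝ (Fin d)) (hΔu : ∀ t, Δu t = utilde t - u t)
    (Δx : ℕ → EuclideanSpace ℝ (Fin d)) (hΔx : ∀ t, Δx t = ∑ j ∈ Finset.range t, Δu j) :
    deriv (fun α : ℝ => energyF d T G (fun t => x t + α • Δx t)) 0
        = -2 * ∑ t ∈ Finset.range T, Δu t ⬝ᵥ (G (x t) (u t)).mulVec (Δu t) ∧
    deriv (fun α : ℝ => energyF d T G (fun t => x t + α • Δx t)) 0 ≤ 0 ∧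
    (deriv (fun α : ℝ => energyF d T G (fun t => x t + α • Δx t)) 0 = 0 ↔
      ∀ t < T, utilde t = u t) := by
  -- basic facts about Δx
  have hstep : ∀ t, Δx (t + 1) = Δx t + Δu t := by
    intro t; rw [hΔx, hΔx, Finset.sum_range_succ]
  have hΔx0 : Δx 0 = 0 := by rw [hΔx]; simp
  have hΔxT : Δx T = 0 := by
    rw [hΔx]
    have h1 : ∑ j ∈ Finset.range T, Δu j
        = (∑ j ∈ Finset.range T, utilde j) - ∑ j ∈ Finset.range T, u j := by
      rw [← Finset.sum_sub_distrib]
      exact Finset.sum_congr rfl fun j _ => hΔu j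
    have h2 : ∑ j ∈ Finset.range T, u j = x T - x 0 := by
      have := Finset.sum_range_sub x T
      rw [← this]
      exact Finset.sum_congr rfl fun j _ => hu j
    rw [h1, h2, hsys3, hx0, hxT, sub_self]
  -- rewrite the energy along the deformed curve
  have hfun : (fun α : ℝ => energyF d T G (fun t => x t + α • Δx t))
      = fun α : ℝ => ∑ t ∈ Finset.range T,
          ((u t + α • Δu t) ⬝ᵥ
            (G (x t + α • Δx t) (u t + α • Δu t)).mulVec (u t + α • Δu t)) := by
    funext α
    unfold energyF
    refine Finset.sum_congr rfl fun t _ => ?_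
    have hv : (x (t + 1) + α • Δx (t + 1)) - (x t + α • Δx t) = u t + α • Δu t := by
      rw [hstep t, hu t, smul_add]; abel
    beta_reduce
    rw [← WithLp.ofLp_sub (x := x (t + 1) + α • Δx (t + 1)) (y := x t + α • Δx t), hv]
    rfl
  -- the derivative via keyDeriv
  have hD : HasDerivAt (fun α : ℝ => ∑ t ∈ Finset.range T,
        ((u t + α • Δu t) ⬝ᵥ
          (G (x t + α • Δx t) (u t + α • Δu t)).mulVec (u t + α • Δu t)))
      (∑ t ∈ Finset.range T,
        ((gradient (fun y => u t ⬝ᵥ (G y (u t)).mulVec (u t)) (x t) :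
            EuclideanSpace ℝ (Fin d)) ⬝ᵥ Δx t
          + (gradient (fun y => u t ⬝ᵥ (G (x t) y).mulVec (u t)) (u t) :
            EuclideanSpace ℝ (Fin d)) ⬝ᵥ Δu t
          + (Δu t ⬝ᵥ (G (x t) (u t)).mulVec (u t)
              + u t ⬝ᵥ (G (x t) (u t)).mulVec (Δu t)))) 0 :=
    HasDerivAt.fun_sum fun t _ => keyDeriv hGsmooth (x t) (u t) (Δx t) (Δu t)
  have hderiv : deriv (fun α : ℝ => energyF d T G (fun t => x t + α • Δx t)) 0
      = ∑ t ∈ Finset.range T,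
        ((gradient (fun y => u t ⬝ᵥ (G y (u t)).mulVec (u t)) (x t) :
            EuclideanSpace ℝ (Fin d)) ⬝ᵥ Δx t
          + (gradient (fun y => u t ⬝ᵥ (G (x t) y).mulVec (u t)) (u t) :
            EuclideanSpace ℝ (Fin d)) ⬝ᵥ Δu t
          + (Δu t ⬝ᵥ (G (x t) (u t)).mulVec (u t)
              + u t ⬝ᵥ (G (x t) (u t)).mulVec (Δu t))) := by
    rw [hfun]; exact hD.deriv
  -- the ν-sum telescopes to ∑ μ_t ⬝ Δu_t
  have hnu : ∑ t ∈ Finset.range T,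
      (gradient (fun y => u t ⬝ᵥ (G y (u t)).mulVec (u t)) (x t) :
        EuclideanSpace ℝ (Fin d)) ⬝ᵥ Δx t
      = ∑ t ∈ Finset.range T, μ t ⬝ᵥ Δu t := by
    have key : ∑ t ∈ Finset.range T,
        ((gradient (fun y => u t ⬝ᵥ (G y (u t)).mulVec (u t)) (x t) :
          EuclideanSpace ℝ (Fin d)) ⬝ᵥ Δx t + μ t ⬝ᵥ Δx t)
        = ∑ t ∈ Finset.range T, μ t ⬝ᵥ Δx (t + 1) := by
      obtain ⟨n, rfl⟩ : ∃ n, T = n + 1 := ⟨T - 1, by omega⟩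
      rw [Finset.sum_range_succ' _ n, Finset.sum_range_succ]
      have h0 : (gradient (fun y => u 0 ⬝ᵥ (G y (u 0)).mulVec (u 0)) (x 0) :
          EuclideanSpace ℝ (Fin d)) ⬝ᵥ Δx 0 + μ 0 ⬝ᵥ Δx 0 = 0 := by
        rw [hΔx0]; simp
      have hn : μ n ⬝ᵥ Δx (n + 1) = 0 := by rw [hΔxT]; simp
      rw [h0, hn, add_zero, add_zero]
      refine Finset.sum_congr rfl fun s hs => ?_
      have hs' : s < n := Finset.mem_range.mp hs
      have hν := hsys2 (s + 1) (by omega) (by omega)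
      simp only [Nat.add_sub_cancel] at hν
      have hν' : (gradient (fun y => u (s+1) ⬝ᵥ (G y (u (s+1))).mulVec (u (s+1))) (x (s+1)) :
          EuclideanSpace ℝ (Fin d)) = μ s - μ (s + 1) := by
        rw [← hν]; abel
      rw [hν', WithLp.ofLp_sub, sub_dotProduct]
      ring
    have hsplit : ∀ t, μ t ⬝ᵥ Δu t = μ t ⬝ᵥ Δx (t + 1) - μ t ⬝ᵥ Δx t := by
      intro t
      rw [hstep t, WithLp.ofLp_add, dotProduct_add]
      ring
    calc ∑ t ∈ Finset.range T, (gradient (fun y => u t ⬝ᵥ (G y (u t)).mulVec (u t)) (x t) :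
            EuclideanSpace ℝ (Fin d)) ⬝ᵥ Δx t
        = ∑ t ∈ Finset.range T,
            (((gradient (fun y => u t ⬝ᵥ (G y (u t)).mulVec (u t)) (x t) :
              EuclideanSpace ℝ (Fin d)) ⬝ᵥ Δx t + μ t ⬝ᵥ Δx t) - μ t ⬝ᵥ Δx t) := by
          exact Finset.sum_congr rfl fun t _ => by ring
      _ = ∑ t ∈ Finset.range T,
            ((gradient (fun y => u t ⬝ᵥ (G y (u t)).mulVec (u t)) (x t) :
              EuclideanSpace ℝ (Fin d)) ⬝ᵥ Δx t + μ t ⬝ᵥ Δx t)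
          - ∑ t ∈ Finset.range T, μ t ⬝ᵥ Δx t := Finset.sum_sub_distrib _ _
      _ = ∑ t ∈ Finset.range T, μ t ⬝ᵥ Δx (t + 1) - ∑ t ∈ Finset.range T, μ t ⬝ᵥ Δx t := by
          rw [key]
      _ = ∑ t ∈ Finset.range T, (μ t ⬝ᵥ Δx (t + 1) - μ t ⬝ᵥ Δx t) := (Finset.sum_sub_distrib _ _).symm
      _ = ∑ t ∈ Finset.range T, μ t ⬝ᵥ Δu t :=
          Finset.sum_congr rfl fun t _ => (hsplit t).symm
  -- per-t identity for the remaining terms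
  have hper : ∀ t ∈ Finset.range T,
      (gradient (fun y => u t ⬝ᵥ (G (x t) y).mulVec (u t)) (u t) :
        EuclideanSpace ℝ (Fin d)) ⬝ᵥ Δu t
        + (Δu t ⬝ᵥ (G (x t) (u t)).mulVec (u t) + u t ⬝ᵥ (G (x t) (u t)).mulVec (Δu t))
      = -2 * (Δu t ⬝ᵥ (G (x t) (u t)).mulVec (Δu t)) - μ t ⬝ᵥ Δu t := by
    intro t ht
    have ht' : t < T := Finset.mem_range.mp ht
    have h := congrArg (fun z : EuclideanSpace ℝ (Fin d) => z ⬝ᵥ Δu t) (hsys1 t ht')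
    simp only [toE, WithLp.ofLp_add, WithLp.ofLp_smul, WithLp.ofLp_zero, WithLp.ofLp_toLp] at h
    rw [add_dotProduct, add_dotProduct, smul_dotProduct,
      zero_dotProduct] at h
    rw [smul_eq_mul] at h
    -- h : 2 * (G₀ *ᵥ ũ) ⬝ᵥ Δu + ζ ⬝ᵥ Δu + μ ⬝ᵥ Δu = 0
    have hsymm1 : (G (x t) (u t)).mulVec (utilde t) ⬝ᵥ Δu t
        = utilde t ⬝ᵥ (G (x t) (u t)).mulVec (Δu t) := symm_dot (hGsym _ _) _ _
    have hsymm2 : Δu t ⬝ᵥ (G (x t) (u t)).mulVec (u t)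
        = u t ⬝ᵥ (G (x t) (u t)).mulVec (Δu t) := by
      rw [← symm_dot (hGsym _ _) (Δu t) (u t), dotProduct_comm]
    have hsub : utilde t ⬝ᵥ (G (x t) (u t)).mulVec (Δu t)
        - u t ⬝ᵥ (G (x t) (u t)).mulVec (Δu t)
        = Δu t ⬝ᵥ (G (x t) (u t)).mulVec (Δu t) := by
      rw [← sub_dotProduct, ← WithLp.ofLp_sub, ← hΔu t]
    rw [hsymm1] at h
    rw [hsymm2]
    linarith [hsub, h]
  -- assemble the main identity
  have hmain : deriv (fun α : ℝ => energyF d T G (fun t => x t + α • Δx t)) 0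
      = -2 * ∑ t ∈ Finset.range T, Δu t ⬝ᵥ (G (x t) (u t)).mulVec (Δu t) := by
    rw [hderiv]
    have : ∀ t ∈ Finset.range T,
        ((gradient (fun y => u t ⬝ᵥ (G y (u t)).mulVec (u t)) (x t) :
            EuclideanSpace ℝ (Fin d)) ⬝ᵥ Δx t
          + (gradient (fun y => u t ⬝ᵥ (G (x t) y).mulVec (u t)) (u t) :
            EuclideanSpace ℝ (Fin d)) ⬝ᵥ Δu t
          + (Δu t ⬝ᵥ (G (x t) (u t)).mulVec (u t)
              + u t ⬝ᵥ (G (x t) (u t)).mulVec (Δu t)))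
        = (gradient (fun y => u t ⬝ᵥ (G y (u t)).mulVec (u t)) (x t) :
            EuclideanSpace ℝ (Fin d)) ⬝ᵥ Δx t
          + (-2 * (Δu t ⬝ᵥ (G (x t) (u t)).mulVec (Δu t)) - μ t ⬝ᵥ Δu t) := by
      intro t ht
      rw [add_assoc, hper t ht]
    rw [Finset.sum_congr rfl this, Finset.sum_add_distrib, hnu]
    have : ∑ t ∈ Finset.range T,
        (-2 * (Δu t ⬝ᵥ (G (x t) (u t)).mulVec (Δu t)) - μ t ⬝ᵥ Δu t)
        = -2 * ∑ t ∈ Finset.range T, Δu t ⬝ᵥ (G (x t) (u t)).mulVec (Δu t)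
          - ∑ t ∈ Finset.range T, μ t ⬝ᵥ Δu t := by
      rw [Finset.sum_sub_distrib, ← Finset.mul_sum]
    rw [this]
    ring
  -- positivity facts
  have hqnn : ∀ t, 0 ≤ Δu t ⬝ᵥ (G (x t) (u t)).mulVec (Δu t) := by
    intro t
    rcases eq_or_ne (Δu t) 0 with h | h
    · rw [h]; simp
    · have := (hGpos (x t) (u t)).dotProduct_mulVec_pos (x := (Δu t).ofLp) (by simpa using h)
      simpa using this.le
  have hSnn : 0 ≤ ∑ t ∈ Finset.range T, Δu t ⬝ᵥ (G (x t) (u t)).mulVec (Δu t) :=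
    Finset.sum_nonneg fun t _ => hqnn t
  refine ⟨hmain, by rw [hmain]; linarith, ?_⟩
  rw [hmain]
  constructor
  · intro h0 t ht
    have hS0 : ∑ t ∈ Finset.range T, Δu t ⬝ᵥ (G (x t) (u t)).mulVec (Δu t) = 0 := by
      linarith
    have hq0 : Δu t ⬝ᵥ (G (x t) (u t)).mulVec (Δu t) = 0 :=
      (Finset.sum_eq_zero_iff_of_nonneg fun s _ => hqnn s).mp hS0 t (Finset.mem_range.mpr ht)
    have hΔu0 : Δu t = 0 := by
      by_contra h
      have := (hGpos (x t) (u t)).dotProduct_mulVec_pos (x := (Δu t).ofLp) (by simpa using h)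
      simp only [RCLike.star_def, starRingEnd_apply, star_trivial, RCLike.re_to_real] at this
      rw [hq0] at this
      exact lt_irrefl 0 this
    have := hΔu t
    rw [hΔu0] at this
    exact (sub_eq_zero.mp this.symm)
  · intro h
    have : ∀ t ∈ Finset.range T, Δu t ⬝ᵥ (G (x t) (u t)).mulVec (Δu t) = 0 := by
      intro t ht
      have : Δu t = 0 := by rw [hΔu t, h t (Finset.mem_range.mp ht), sub_self]
      rw [this]; simp
    rw [Finset.sum_eq_zero this]
    ring
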